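/- Let ā(m) denote the number of cyclic signatures of length m. Then for all m ≥ 1, ā(m) = 1 + (1−√2)^m + (1+√2)^m, as an equality of real numbers. -/

import Mathlib

open scoped Classical

/-- The three-letter alphabet {uncovered, covered, occupied}. -/
inductive VState : Type
  | unc | cov | occ
  deriving DecidableEq

instance instFintypeVState : Fintype VState where
  elems := {VState.unc, VState.cov, VState.occ}
  complete := by intro x; cases x <;> simp

/-- A signature of length `m`: a string over {unc, cov, occ} with no adjacent
(unc, occ) or (occ, unc) pair. -/
def IsSignature {m : ℕ} (σ : Fin m → VState) : Prop :=
  ∀ i : Fin m, ∀ h : (i : ℕ) + 1 < m,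
    ¬(σ i = VState.unc ∧ σ ⟨(i : ℕ) + 1, h⟩ = VState.occ) ∧
    ¬(σ i = VState.occ ∧ σ ⟨(i : ℕ) + 1, h⟩ = VState.unc)

/-- A cyclic signature: a signature where the adjacency constraint is also imposed
on the pair (first symbol, last symbol). -/
def IsCycSignature {m : ℕ} (σ : Fin m → VState) : Prop :=
  IsSignature σ ∧ ∀ h : 0 < m,
    ¬(σ ⟨0, h⟩ = VState.unc ∧ σ ⟨m - 1, Nat.sub_lt h Nat.one_pos⟩ = VState.occ) ∧
    ¬(σ ⟨0, h⟩ = VState.occ ∧ σ ⟨m - 1, Nat.sub_lt h Nat.one_pos⟩ = VState.unc)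

/-- `ā(m)`: the number of cyclic signatures of length `m`. -/
noncomputable def numCycSig (m : ℕ) : ℕ :=
  Fintype.card {σ : Fin m → VState // IsCycSignature σ}

/-! A cyclic signature of length `m` is a closed walk of length `m` in the graph on the three
letters whose edges are the compatible pairs (a loop at every letter), so `ā(m)` is the trace of
the `m`-th power of the transfer matrix `A = [[1,1,0],[1,1,1],[0,1,1]]` (letters ordered
`unc, cov, occ`). The matrix `A` is symmetric with eigenvalues `1 - √2`, `1`, `1 + √2`, hence
`tr (A ^ m)` is the sum of their `m`-th powers. -/

open Matrix

theorem Fintype.sum_pi_fin_succ {α M : Type*} [Fintype α] [AddCommMonoid M] (n : ℕ)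
    (f : (Fin (n + 1) → α) → M) : ∑ q, f q = ∑ a, ∑ p : Fin n → α, f (Fin.cons a p) := by
  rw [← Fintype.sum_prod_type', ← (Fin.consEquiv fun _ => α).sum_comp]
  rfl

namespace Matrix

variable {ι κ R : Type*} [Fintype ι] [Fintype κ] [DecidableEq ι] [DecidableEq κ] [CommSemiring R]

theorem pow_succ_apply_eq_sum_prod (M : Matrix ι ι R) (n : ℕ) (i j : ι) :
    (M ^ (n + 1)) i j = ∑ p : Fin n → ι, ∏ k : Fin (n + 1),
      M (Fin.cons (α := fun _ => ι) i p k) (Fin.snoc (α := fun _ => ι) p j k) := by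
  induction n generalizing i with
  | zero => simp [Fin.snoc]
  | succ n ih =>
    rw [pow_succ', mul_apply, Fintype.sum_pi_fin_succ]
    refine Finset.sum_congr rfl fun u _ => ?_
    simp only [ih, Finset.mul_sum, Fin.prod_univ_succ (n := n + 1), Fin.cons_zero, Fin.cons_succ,
      ← Fin.cons_snoc_eq_snoc_cons]

theorem trace_pow_succ_eq_sum_prod (M : Matrix ι ι R) (n : ℕ) :
    trace (M ^ (n + 1)) = ∑ σ : Fin (n + 1) → ι, ∏ k, M (σ k) (σ (finRotate _ k)) := by
  simp only [trace, diag, pow_succ_apply_eq_sum_prod, Fintype.sum_pi_fin_succ,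
    Fin.snoc_eq_cons_rotate]

theorem trace_pow_eq_sum_pow_of_eq_mul_diagonal_mul {A : Matrix ι ι R} {P : Matrix ι κ R}
    {Q : Matrix κ ι R} {d : κ → R} (hQP : Q * P = 1) (hA : A = P * diagonal d * Q) {k : ℕ}
    (hk : k ≠ 0) : trace (A ^ k) = ∑ i, d i ^ k := by
  have hpow : ∀ k : ℕ, A ^ (k + 1) = P * diagonal d ^ (k + 1) * Q := by
    intro k
    induction k with
    | zero => simpa using hA
    | succ k ih =>
      rw [pow_succ A, ih, hA, pow_succ (diagonal d) (k + 1)]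
      simp only [Matrix.mul_assoc]
      rw [← Matrix.mul_assoc Q P, hQP, Matrix.one_mul]
  obtain ⟨k, rfl⟩ := Nat.exists_eq_add_one_of_ne_zero hk
  rw [hpow, trace_mul_comm, ← Matrix.mul_assoc, hQP, Matrix.one_mul, diagonal_pow, trace_diagonal]
  rfl

end Matrix

namespace VState

def Compatible (s t : VState) : Prop :=
  ¬(s = unc ∧ t = occ) ∧ ¬(s = occ ∧ t = unc)

instance : DecidableRel Compatible := fun _ _ => by unfold Compatible; infer_instance

theorem Compatible.symm {s t : VState} (h : Compatible s t) : Compatible t s :=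
  ⟨fun h' => h.2 h'.symm, fun h' => h.1 h'.symm⟩

theorem sum_univ {M : Type*} [AddCommMonoid M] (f : VState → M) :
    ∑ s, f s = f unc + f cov + f occ := by
  simp [Finset.univ, Fintype.elems, add_assoc]

end VState

open VState

def transferMatrix : Matrix VState VState ℝ := of fun s t => if Compatible s t then 1 else 0

theorem isCycSignature_iff {n : ℕ} (σ : Fin (n + 1) → VState) :
    IsCycSignature σ ↔ ∀ k, Compatible (σ k) (σ (finRotate _ k)) := by
  constructor
  · rintro ⟨hsig, hcyc⟩ k
    induction k using Fin.lastCases with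
    | last => rw [finRotate_last]; exact Compatible.symm (hcyc n.succ_pos)
    | cast i => rw [finRotate_apply, Fin.coeSucc_eq_succ]; exact hsig i.castSucc i.succ.isLt
  · intro h
    refine ⟨fun ⟨i, hi⟩ hsucc => ?_, fun _ => ?_⟩
    · have hcompat := h ⟨i, hi⟩
      rwa [finRotate_of_lt (Nat.lt_of_succ_lt_succ hsucc)] at hcompat
    · have hlast := h (Fin.last n)
      rw [finRotate_last] at hlast
      exact hlast.symm

theorem numCycSig_succ_eq_trace (n : ℕ) :
    (numCycSig (n + 1) : ℝ) = trace (transferMatrix ^ (n + 1)) := by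
  rw [trace_pow_succ_eq_sum_prod]
  simp only [transferMatrix, of_apply, Finset.prod_boole]
  rw [numCycSig, Fintype.card_subtype, Finset.natCast_card_filter]
  refine Finset.sum_congr rfl fun σ _ => ?_
  simp [isCycSignature_iff]

noncomputable def transferEigenvalues : Fin 3 → ℝ := ![1 - √2, 1, 1 + √2]

noncomputable def transferEigenbasis : Matrix VState (Fin 3) ℝ :=
  of fun s => match s with
    | unc => ![1, 1, 1]
    | cov => ![-√2, 0, √2]
    | occ => ![1, -1, 1]

/-- The columns of `transferEigenbasis` are orthogonal eigenvectors of the symmetric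
`transferMatrix`, so its inverse is its transpose with row `i` divided by `‖column i‖²`. -/
noncomputable def transferEigenbasisInv : Matrix (Fin 3) VState ℝ :=
  of fun i s => ![1 / 4, 1 / 2, 1 / 4] i * transferEigenbasis s i

theorem transferEigenbasisInv_mul : transferEigenbasisInv * transferEigenbasis = 1 := by
  ext i j
  fin_cases i <;> fin_cases j <;>
    simp [transferEigenbasisInv, transferEigenbasis, mul_apply, VState.sum_univ, one_apply] <;>
    ring_nf <;> norm_num

theorem transferMatrix_eq_conj :
    transferMatrix = transferEigenbasis * diagonal transferEigenvalues * transferEigenbasisInv := by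
  ext s t
  cases s <;> cases t <;>
    simp [transferMatrix, Compatible, transferEigenvalues, transferEigenbasisInv,
      transferEigenbasis, mul_apply, Fin.sum_univ_three] <;>
    ring_nf <;> norm_num

/-- For all `m ≥ 1`, `ā(m) = 1 + (1−√2)^m + (1+√2)^m` as real numbers. -/
theorem numCycSig_closed_form (m : ℕ) (hm : 1 ≤ m) :
    (numCycSig m : ℝ) = 1 + (1 - Real.sqrt 2) ^ m + (1 + Real.sqrt 2) ^ m := by
  obtain ⟨n, rfl⟩ := Nat.exists_eq_add_of_le' hm
  rw [numCycSig_succ_eq_trace, trace_pow_eq_sum_pow_of_eq_mul_diagonal_mul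
    transferEigenbasisInv_mul transferMatrix_eq_conj n.add_one_ne_zero, Fin.sum_univ_three]
  simp only [transferEigenvalues, cons_val_zero, cons_val_one, cons_val, one_pow]
  ring
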